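/- arXiv:1405.0002 — 8 statements merged into one kernel-verified Lean document; each statement's English description precedes it below -/
import Mathlib

section
/- Let D be a digraph of order n ≥ 3 containing a cycle C_m of length m with 2 ≤ m ≤ n−1, and let x be a vertex not on this cycle. If d(x, C_m) ≥ m+1 (the number of arcs between x and vertices of C_m is at least m+1), then D contains a cycle of length k for every k with 2 ≤ k ≤ m+1. -/
open Finset

/-- A list of distinct vertices whose consecutive members are joined by arcs. -/
def IsPathList {V : Type*} (A : V → V → Prop) (p : List V) : Prop :=
  p.Nodup ∧ p.Chain' A

/-- A directed cycle: at least two distinct vertices, consecutive arcs, and an arc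
from the last vertex back to the first. -/
def IsCycleList {V : Type*} (A : V → V → Prop) (c : List V) : Prop :=
  2 ≤ c.length ∧ c.Nodup ∧ c.Chain' A ∧ ∀ h : c ≠ [], A (c.getLast h) (c.head h)

/-- A Hamiltonian bypass: a Hamiltonian path `v₁ v₂ … vₙ` together with the arc `v₁ vₙ`. -/
def HasHamBypass {V : Type*} (A : V → V → Prop) : Prop :=
  ∃ l : List V, l.Nodup ∧ (∀ v, v ∈ l) ∧ l.Chain' A ∧
    ∀ h : l ≠ [], A (l.head h) (l.getLast h)

/-- A Hamiltonian cycle. -/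
def HasHamCycle {V : Type*} (A : V → V → Prop) : Prop :=
  ∃ c : List V, IsCycleList A c ∧ ∀ v, v ∈ c

/-- out-degree of `x` towards a set `S`. -/
def outDegOn {V : Type*} [DecidableEq V] (A : V → V → Prop) [DecidableRel A]
    (x : V) (S : Finset V) : ℕ := (S.filter fun y => A x y).card

/-- in-degree of `x` from a set `S`. -/
def inDegOn {V : Type*} [DecidableEq V] (A : V → V → Prop) [DecidableRel A]
    (x : V) (S : Finset V) : ℕ := (S.filter fun y => A y x).card

/-- degree of `x` with respect to a set `S` (arcs in both directions). -/
def degOn {V : Type*} [DecidableEq V] (A : V → V → Prop) [DecidableRel A]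
    (x : V) (S : Finset V) : ℕ := outDegOn A x S + inDegOn A x S

/-- out-degree of `x`. -/
def outDeg {V : Type*} [Fintype V] [DecidableEq V] (A : V → V → Prop) [DecidableRel A]
    (x : V) : ℕ := outDegOn A x Finset.univ

/-- in-degree of `x`. -/
def inDeg {V : Type*} [Fintype V] [DecidableEq V] (A : V → V → Prop) [DecidableRel A]
    (x : V) : ℕ := inDegOn A x Finset.univ

/-- degree of `x`. -/
def deg {V : Type*} [Fintype V] [DecidableEq V] (A : V → V → Prop) [DecidableRel A]
    (x : V) : ℕ := outDeg A x + inDeg A x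

/-- The condition `A_k` of Manoussakis: for every triple of distinct vertices `x, y, z`
with `x` and `y` non-adjacent, if `xz` is not an arc then
`d(x)+d(y)+d⁺(x)+d⁻(z) ≥ 3n-2+k`, and if `zx` is not an arc then
`d(x)+d(y)+d⁻(x)+d⁺(z) ≥ 3n-2+k`. -/
def CondA {V : Type*} [Fintype V] [DecidableEq V] (A : V → V → Prop) [DecidableRel A]
    (k : ℤ) : Prop :=
  ∀ x y z : V, x ≠ y → z ≠ x → z ≠ y → ¬A x y → ¬A y x →
    (¬A x z → (deg A x + deg A y + outDeg A x + inDeg A z : ℤ) ≥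
      3 * (Fintype.card V : ℤ) - 2 + k) ∧
    (¬A z x → (deg A x + deg A y + inDeg A x + outDeg A z : ℤ) ≥
      3 * (Fintype.card V : ℤ) - 2 + k)

/-! For `t < m`, if `x → cᵢ` and `c_{i+t} → x` are arcs (indices mod `m`), then
`x cᵢ c_{i+1} … c_{i+t}` is a cycle of length `t + 2`. Such an `i` exists by pigeonhole:
`d⁺(x, C) = #{i | x → cᵢ}` and `d⁻(x, C) = #{i | c_{i+t} → x}` add up to more than `m`. -/

theorem Finset.exists_and_comp_perm_of_card_lt {ι : Type*} [Fintype ι] [DecidableEq ι]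
    {p q : ι → Prop} [DecidablePred p] [DecidablePred q] (σ : Equiv.Perm ι)
    (h : Fintype.card ι < #{i | p i} + #{i | q i}) : ∃ i, p i ∧ q (σ i) := by
  rw [← Finset.card_equiv σ (s := {i | q (σ i)}) (t := {i | q i}) (by simp)] at h
  obtain ⟨i, hi⟩ := inter_nonempty_of_card_lt_card_add_card (subset_univ _) (subset_univ _) h
  simp only [mem_inter, mem_filter, mem_univ, true_and] at hi
  exact ⟨i, hi⟩

theorem List.Nodup.card_filter_toFinset {α : Type*} [DecidableEq α] {l : List α} (hl : l.Nodup)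
    (p : α → Prop) [DecidablePred p] :
    #(l.toFinset.filter p) = #{j : Fin l.length | p (l.get j)} := by
  symm
  refine Finset.card_nbij l.get (fun j hj => ?_) hl.injective_get.injOn fun a ha => ?_
  · simp_all
  · simp only [coe_filter, List.mem_toFinset, Set.mem_ofPred_eq] at ha
    obtain ⟨j, rfl⟩ := List.mem_iff_get.mp ha.1
    exact ⟨j, by simpa using ha.2, rfl⟩

section

open Fin.NatCast

variable {V : Type*} {A : V → V → Prop}

theorem IsCycleList.adj_get_add_one {c : List V} (hc : IsCycleList A c) [NeZero c.length]
    (j : Fin c.length) : A (c.get j) (c.get (j + 1)) := by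
  obtain ⟨-, -, hchain, hwrap⟩ := hc
  by_cases hj : j.val + 1 < c.length
  · simpa [Fin.val_add_one_of_lt' hj] using List.isChain_iff_getElem.mp hchain j hj
  · have hne : c ≠ [] := List.ne_nil_of_length_pos (NeZero.pos _)
    have hj' : j.val = c.length - 1 := by omega
    have hj1 : (j + 1).val = 0 := by
      rw [Fin.val_add, Fin.val_one', Nat.add_mod_mod, hj', Nat.sub_add_cancel NeZero.one_le,
        Nat.mod_self]
    simpa [List.getLast_eq_getElem, List.head_eq_getElem, hj', hj1] using hwrap hne

theorem isCycleList_cons_ofFn {n : ℕ} [NeZero n] {v : Fin n → V} (hv : Function.Injective v)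
    (hsucc : ∀ j, A (v j) (v (j + 1))) {x : V} (hx : x ∉ Set.range v) {i : Fin n} {t : ℕ}
    (ht : t < n) (hxi : A x (v i)) (hix : A (v (i + (t : Fin n))) x) :
    IsCycleList A (x :: List.ofFn fun a : Fin (t + 1) => v (i + ((a : ℕ) : Fin n))) := by
  refine ⟨by simp, List.nodup_cons.mpr ⟨?_, ?_⟩, List.isChain_cons.mpr ⟨?_, ?_⟩, fun _ => ?_⟩
  · rw [List.mem_ofFn]
    rintro ⟨a, ha⟩
    exact hx ⟨_, ha⟩
  · rw [List.nodup_ofFn]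
    intro a b hab
    have := congrArg Fin.val (add_left_cancel (hv hab))
    simp only [Fin.val_natCast] at this
    ext
    rwa [Nat.mod_eq_of_lt (by omega), Nat.mod_eq_of_lt (by omega)] at this
  · simpa using hxi
  · refine List.isChain_ofFn.mpr fun a ha => ?_
    simpa [add_assoc] using hsucc (i + a)
  · rw [List.getLast_cons (by simp), List.getLast_ofFn]
    simpa using hix

theorem IsCycleList.exists_isCycleList_length_add_two [DecidableEq V] [DecidableRel A]
    {c : List V} (hc : IsCycleList A c) {x : V} (hx : x ∉ c)
    (hd : c.length < degOn A x c.toFinset) {t : ℕ} (ht : t < c.length) :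
    ∃ c' : List V, IsCycleList A c' ∧ c'.length = t + 2 := by
  have : NeZero c.length := ⟨by have := hc.1; omega⟩
  have hnodup : c.Nodup := hc.2.1
  obtain ⟨i, hxi, hix⟩ :
      ∃ i, A x (c.get i) ∧ A (c.get (Equiv.addRight (t : Fin c.length) i)) x := by
    refine Finset.exists_and_comp_perm_of_card_lt (p := fun j => A x (c.get j))
      (q := fun j => A (c.get j) x) _ ?_
    rwa [Fintype.card_fin, ← hnodup.card_filter_toFinset, ← hnodup.card_filter_toFinset (A · x)]
  have hx' : x ∉ Set.range c.get := fun ⟨j, hj⟩ => hx (hj ▸ List.get_mem c j)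
  exact ⟨_, isCycleList_cons_ofFn hnodup.injective_get hc.adj_get_add_one hx' ht hxi hix, by simp⟩

end

theorem stmt0_general {V : Type*} [DecidableEq V] (A : V → V → Prop) [DecidableRel A]
    (c : List V) (m : ℕ) (hc : IsCycleList A c) (hmlen : c.length = m)
    (x : V) (hx : x ∉ c)
    (hd : m + 1 ≤ degOn A x c.toFinset) :
    ∀ k, 2 ≤ k → k ≤ m + 1 → ∃ c' : List V, IsCycleList A c' ∧ c'.length = k := by
  intro k hk2 hkm
  obtain ⟨t, rfl⟩ : ∃ t, k = t + 2 := ⟨k - 2, by omega⟩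
  exact hc.exists_isCycleList_length_add_two hx (by omega) (by omega)

/-- Lemma 1. -/
theorem stmt0 {V : Type*} [Fintype V] [DecidableEq V] (A : V → V → Prop) [DecidableRel A]
    (hirr : ∀ v, ¬A v v) (hn : 3 ≤ Fintype.card V)
    (c : List V) (m : ℕ) (hc : IsCycleList A c) (hmlen : c.length = m)
    (hm2 : 2 ≤ m) (hm3 : m ≤ Fintype.card V - 1)
    (x : V) (hx : x ∉ c)
    (hd : m + 1 ≤ degOn A x c.toFinset) :
    ∀ k, 2 ≤ k → k ≤ m + 1 → ∃ c' : List V, IsCycleList A c' ∧ c'.length = k :=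
  stmt0_general A c m hc hmlen x hx hd
end

section
/- Let D be a digraph of order n ≥ 3 containing a path P = x_1 x_2 … x_m with 2 ≤ m ≤ n−1, and let x be a vertex not on P. If d(x,P) ≥ m+2, then there exists i ∈ [1, m−1] such that both x_i x and x x_{i+1} are arcs of D; in particular D contains the path x_1 … x_i x x_{i+1} … x_m of length m. -/
open Finset

/-!
If no arc `xᵢ → x` is followed by an arc `x → xᵢ₊₁`, then for each `i < m` the arcs `xᵢ → x`
and `x → xᵢ₊₁` together contribute at most one to `d(x, P)`, while `x → x₁` and `xₘ → x`
contribute at most two, so `d(x, P) ≤ (m - 1) + 2 = m + 1`.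
-/

namespace List

variable {α : Type*}

theorem countP_add_countP_cons_le_length_add_one (P Q : α → Bool) :
    ∀ (a : α) (l : List α), (a :: l).IsChain (fun a b => ¬(P a ∧ Q b)) →
      l.countP Q + (a :: l).countP P ≤ l.length + 1
  | a, [], _ => by simp [countP_cons]; split <;> omega
  | a, b :: l, h => by
    rw [isChain_cons_cons] at h
    have ih := countP_add_countP_cons_le_length_add_one P Q b l h.2
    have hab : (if P a then 1 else 0) + (if Q b then 1 else 0) ≤ 1 := by
      split <;> split <;> simp_all
    simp only [countP_cons, length_cons] at ih ⊢
    omega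

theorem countP_add_countP_le_length_add_one (P Q : α → Bool) {l : List α}
    (h : l.IsChain (fun a b => ¬(P a ∧ Q b))) :
    l.countP Q + l.countP P ≤ l.length + 1 := by
  cases l with
  | nil => simp
  | cons a l =>
    have := countP_add_countP_cons_le_length_add_one P Q a l h
    simp only [countP_cons, length_cons] at this ⊢
    split <;> omega

theorem card_filter_toFinset_le_countP [DecidableEq α] (P : α → Bool) (l : List α) :
    (l.toFinset.filter (P ·)).card ≤ l.countP P := by
  rw [← toFinset_filter, countP_eq_length_filter]
  exact toFinset_card_le _

end List

theorem degOn_toFinset_le_length_add_one {V : Type*} [DecidableEq V] {A : V → V → Prop}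
    [DecidableRel A] {x : V} {p : List V} (h : p.IsChain fun a b => ¬(A a x ∧ A x b)) :
    degOn A x p.toFinset ≤ p.length + 1 := by
  have hsum := List.countP_add_countP_le_length_add_one (fun y => A y x) (fun y => A x y)
    (by simpa using h)
  have hout := List.card_filter_toFinset_le_countP (fun y => A x y) p
  have hin := List.card_filter_toFinset_le_countP (fun y => A y x) p
  simp only [decide_eq_true_eq] at hout hin
  unfold degOn outDegOn inDegOn
  omega

theorem IsPathList.insert_between {V : Type*} {A : V → V → Prop} {l₁ l₂ : List V} {a b x : V}
    (hp : IsPathList A (l₁ ++ a :: b :: l₂)) (hx : x ∉ l₁ ++ a :: b :: l₂) (hax : A a x)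
    (hxb : A x b) : IsPathList A (l₁ ++ a :: x :: b :: l₂) := by
  obtain ⟨hnd, hch⟩ := hp
  refine ⟨?_, ?_⟩
  · have : (l₁ ++ [a]) ++ x :: (b :: l₂) = l₁ ++ a :: x :: b :: l₂ := by simp
    rw [← this, List.nodup_middle]
    simpa using List.nodup_cons.mpr ⟨hx, hnd⟩
  · change (l₁ ++ a :: b :: l₂).IsChain A at hch
    change (l₁ ++ a :: x :: b :: l₂).IsChain A
    simp_all

theorem stmt1_general {V : Type*} [DecidableEq V] (A : V → V → Prop) [DecidableRel A]
    (p : List V) (hp : IsPathList A p)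
    (x : V) (hx : x ∉ p)
    (hd : p.length + 2 ≤ degOn A x p.toFinset) :
    ∃ i : ℕ, ∃ h : i + 1 < p.length,
      (A (p.get ⟨i, Nat.lt_of_succ_lt h⟩) x ∧ A x (p.get ⟨i + 1, h⟩)) ∧
      ∃ q : List V, IsPathList A q ∧ q.toFinset = insert x p.toFinset ∧
        q.head? = p.head? ∧ q.getLast? = p.getLast? := by
  obtain ⟨a, b, l₁, l₂, rfl, hax, hxb⟩ :
      ∃ a b l₁ l₂, p = l₁ ++ a :: b :: l₂ ∧ A a x ∧ A x b := by
    by_contra! hno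
    have hchain : p.IsChain fun a b => ¬(A a x ∧ A x b) :=
      List.isChain_iff_forall_rel_of_append_cons_cons.mpr
        fun a b l₁ l₂ h => not_and.mpr (hno a b l₁ l₂ h)
    have := degOn_toFinset_le_length_add_one hchain
    omega
  refine ⟨l₁.length, by simp, by simpa using ⟨hax, hxb⟩, _, hp.insert_between hx hax hxb,
    ?_, ?_, ?_⟩
  · ext
    simp only [List.toFinset_append, List.toFinset_cons, union_insert, mem_insert, mem_union,
      List.mem_toFinset]
    tauto
  · cases l₁ <;> simp
  · simp [List.getLast?_append]

/-- Lemma 2(i). -/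
theorem stmt1 {V : Type*} [Fintype V] [DecidableEq V] (A : V → V → Prop) [DecidableRel A]
    (hirr : ∀ v, ¬A v v) (hn : 3 ≤ Fintype.card V)
    (p : List V) (hp : IsPathList A p)
    (hm2 : 2 ≤ p.length) (hm3 : p.length ≤ Fintype.card V - 1)
    (x : V) (hx : x ∉ p)
    (hd : p.length + 2 ≤ degOn A x p.toFinset) :
    ∃ i : ℕ, ∃ h : i + 1 < p.length,
      (A (p.get ⟨i, Nat.lt_of_succ_lt h⟩) x ∧ A x (p.get ⟨i + 1, h⟩)) ∧
      ∃ q : List V, IsPathList A q ∧ q.toFinset = insert x p.toFinset ∧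
        q.head? = p.head? ∧ q.getLast? = p.getLast? :=
  stmt1_general A p hp x hx hd
end

section
/- Let D be a digraph of order n ≥ 3 satisfying condition A_0. Suppose x,y and x,z are two distinct pairs of non-adjacent vertices in D. If d(x) + d(y) ≤ 2n − a for some integer a ≥ 1, then d(x) + d(z) ≥ 2n − 2 + a/2. In particular, if d(x) + d(y) ≤ 2n − 2, then d(x) + d(z) ≥ 2n − 1. -/
open Finset

/-- Lemma 5. -/
theorem stmt5 {V : Type*} [Fintype V] [DecidableEq V] (A : V → V → Prop) [DecidableRel A]
    (hirr : ∀ v, ¬A v v) (hn : 3 ≤ Fintype.card V)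
    (hA0 : CondA A 0)
    (x y z : V) (hxy : x ≠ y) (hxz : x ≠ z) (hyz : y ≠ z)
    (h1 : ¬A x y) (h2 : ¬A y x) (h3 : ¬A x z) (h4 : ¬A z x)
    (a : ℤ) (ha : 1 ≤ a)
    (hd : (deg A x + deg A y : ℤ) ≤ 2 * (Fintype.card V : ℤ) - a) :
    ((deg A x + deg A z : ℚ) ≥ 2 * (Fintype.card V : ℚ) - 2 + (a : ℚ) / 2) ∧
    ((deg A x + deg A y : ℤ) ≤ 2 * (Fintype.card V : ℤ) - 2 →
      (deg A x + deg A z : ℤ) ≥ 2 * (Fintype.card V : ℤ) - 1) := by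
  obtain ⟨hc1, hc2⟩ := hA0 x z y hxz hxy.symm hyz h3 h4
  have e1 := hc1 h1
  have e2 := hc2 h2
  have hdeg : ∀ v, (deg A v : ℤ) = outDeg A v + inDeg A v := by
    intro v; simp [deg]
  have key : 2 * ((deg A x : ℤ) + deg A z) ≥
      4 * (Fintype.card V : ℤ) - 4 + a := by
    have hx := hdeg x
    have hy := hdeg y
    push_cast at e1 e2 ⊢
    linarith
  constructor
  · have : ((2 : ℚ)) * ((deg A x : ℚ) + deg A z) ≥
        4 * (Fintype.card V : ℚ) - 4 + a := by exact_mod_cast key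
    linarith
  · intro h
    have key2 : 2 * ((deg A x : ℤ) + deg A z) ≥ 4 * (Fintype.card V : ℤ) - 2 := by
      have hx := hdeg x
      have hy := hdeg y
      push_cast at e1 e2
      linarith
    linarith
end

section
/- (Multi-Insertion Lemma) Let Q = y_1 y_2 … y_s be a path in a digraph D (possibly s = 1) and let P = x_1 x_2 … x_t (t ≥ 2) be a path in D − V(Q). If Q has a collection of partners on P, then D contains an (x_1, x_t)-path with vertex set V(P) ∪ V(Q). -/
open Finset

/-- The path `q` has a partner on the path `p`: an arc `p_i p_{i+1}` of `p` with
arcs from `p_i` to the first vertex of `q` and from the last vertex of `q` to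
`p_{i+1}`. -/
def HasPartner {V : Type*} (A : V → V → Prop) (q p : List V) : Prop :=
  ∃ (hq : q ≠ []) (i : ℕ) (h : i + 1 < p.length),
    A (p.get ⟨i, Nat.lt_of_succ_lt h⟩) (q.head hq) ∧
    A (q.getLast hq) (p.get ⟨i + 1, h⟩)

/-- `q` has a collection of partners on `p`: there are indices
`0 = i₁ < i₂ < ⋯ < i_m = q.length` such that each subpath of `q` between
consecutive indices has a partner on `p`. -/
def HasPartnerCollection {V : Type*} (A : V → V → Prop) (q p : List V) : Prop :=
  ∃ idx : List ℕ, idx.Chain' (· < ·) ∧ idx.head? = some 0 ∧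
    idx.getLast? = some q.length ∧
    ∀ (j : ℕ) (h : j + 1 < idx.length),
      HasPartner A
        ((q.drop (idx.get ⟨j, Nat.lt_of_succ_lt h⟩)).take
          (idx.get ⟨j + 1, h⟩ - idx.get ⟨j, Nat.lt_of_succ_lt h⟩)) p

/-!
Cut `Q` into the consecutive segments `Q₁, …, Q_m` given by the collection of partners, and let
`x y` be the partner arc of `Q₁`. If `Q_k` is the last segment that also has `x y` as a partner,
then the stretch `Q₁ ⋯ Q_k` of `Q` starts at an out-neighbour of `x` and ends at an in-neighbour
of `y`, so it can be inserted into `x y`. Every other arc of `P` survives the insertion, so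
`Q_{k+1}, …, Q_m` still have partners on the new path, and we conclude by induction on the
number of segments. Distinctness plays no role in the construction: the vertex list stays a
permutation of `P ++ Q`, which is duplicate-free since `Q` avoids `P`.
-/

open List

section MultiInsertion

variable {V : Type*}

/-- `s` is a partner of the arc `x y`. -/
def Bridges (A : V → V → Prop) (x y : V) (s : List V) : Prop :=
  s ≠ [] ∧ (∀ a ∈ s.head?, A x a) ∧ ∀ b ∈ s.getLast?, A b y

section Bridges

variable {A : V → V → Prop} {x y : V}

theorem Bridges.append_append {s t : List V} (hs : Bridges A x y s) (ht : Bridges A x y t)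
    (m : List V) : Bridges A x y (s ++ m ++ t) := by
  obtain ⟨hs0, hx, -⟩ := hs
  obtain ⟨ht0, -, hy⟩ := ht
  refine ⟨by simp [hs0], ?_, ?_⟩
  · simpa [head?_append, head?_eq_none_iff, hs0] using hx
  · simpa [getLast?_append, getLast?_eq_none_iff, ht0] using hy

theorem exists_append_bridges_of_bridges {Q : List V} (hQ : Bridges A x y Q)
    (rest : List (List V)) : ∃ mid tail, rest = mid ++ tail ∧
      Bridges A x y (Q ++ mid.flatten) ∧ ∀ s ∈ tail, ¬Bridges A x y s := by
  induction rest using List.reverseRecOn with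
  | nil => exact ⟨[], [], rfl, by simpa using hQ, by simp⟩
  | append_singleton l s ih =>
    by_cases hs : Bridges A x y s
    · refine ⟨l ++ [s], [], by simp, ?_, by simp⟩
      simpa [append_assoc] using hQ.append_append hs l.flatten
    · obtain ⟨mid, tail, rfl, hB, htail⟩ := ih
      refine ⟨mid, tail ++ [s], by simp, hB, ?_⟩
      simpa [or_imp, forall_and] using ⟨htail, hs⟩

end Bridges

theorem List.IsInfix.append_middle {α : Type*} {u v : α} {a c : List α}
    (h : [u, v] <:+: a ++ c) (hne : ¬([u] <:+ a ∧ [v] <+: c)) (b : List α) :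
    [u, v] <:+: a ++ b ++ c := by
  rcases infix_append_iff_ne_nil.mp h with h | h | ⟨l₁, l₂, h₁0, h₂0, huv, h₁, h₂⟩
  · exact (h.trans infix_append_left).trans infix_append_left
  · exact h.trans infix_append_right
  · obtain ⟨rfl, rfl⟩ : l₁ = [u] ∧ l₂ = [v] := by
      rcases l₁ with _ | ⟨_, _ | ⟨_, _⟩⟩ <;> rcases l₂ with _ | ⟨_, _⟩ <;> simp_all
    exact absurd ⟨h₁, h₂⟩ hne

theorem List.IsChain.append_middle {α : Type*} {R : α → α → Prop} {a b c : List α}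
    (h : (a ++ c).IsChain R) (hb : b.IsChain R)
    (hab : ∀ x ∈ a.getLast?, ∀ y ∈ b.head?, R x y)
    (hbc : ∀ x ∈ b.getLast?, ∀ y ∈ c.head?, R x y) : (a ++ b ++ c).IsChain R := by
  rw [isChain_append] at h ⊢
  obtain ⟨ha, hc, hac⟩ := h
  refine ⟨isChain_append.mpr ⟨ha, hb, hab⟩, hc, ?_⟩
  rcases eq_or_ne b [] with rfl | hb0
  · simpa using hac
  · simpa [getLast?_append, getLast?_eq_none_iff, hb0] using hbc

theorem exists_isChain_perm_of_forall_bridges {A : V → V → Prop} (S : List (List V))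
    {p : List V} (hp : p.IsChain A) (hS : S.flatten.IsChain A)
    (hpart : ∀ s ∈ S, ∃ x y, [x, y] <:+: p ∧ Bridges A x y s) :
    ∃ r : List V, r.IsChain A ∧ r.Perm (p ++ S.flatten) ∧ r.head? = p.head? ∧
      r.getLast? = p.getLast? := by
  induction hn : S.length using Nat.strong_induction_on generalizing S p with
  | _ n ih =>
  rcases S with _ | ⟨Q, rest⟩
  · exact ⟨p, hp, by simp, rfl, rfl⟩
  obtain ⟨x, y, ⟨l₁, l₂, rfl⟩, hQ⟩ := hpart Q mem_cons_self
  obtain ⟨mid, tail, rfl, hB, htail⟩ := exists_append_bridges_of_bridges hQ rest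
  set B := Q ++ mid.flatten
  have hsplit : l₁ ++ [x, y] ++ l₂ = (l₁ ++ [x]) ++ (y :: l₂) := by simp
  have hflat : (Q :: (mid ++ tail)).flatten = B ++ tail.flatten := by simp [B]
  rw [hsplit] at hp hpart ⊢
  rw [hflat] at hS ⊢
  have hp' : ((l₁ ++ [x]) ++ B ++ (y :: l₂)).IsChain A :=
    hp.append_middle (hS.infix infix_append_left) (by simpa using hB.2.1)
      (by simpa using hB.2.2)
  have hpart' : ∀ s ∈ tail, ∃ u v, [u, v] <:+: (l₁ ++ [x]) ++ B ++ (y :: l₂) ∧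
      Bridges A u v s := by
    intro s hs
    obtain ⟨u, v, huv, hs'⟩ := hpart s (by simp [hs])
    refine ⟨u, v, huv.append_middle ?_ B, hs'⟩
    rintro ⟨hu, hv⟩
    obtain ⟨rfl, rfl⟩ : u = x ∧ v = y := ⟨by simpa using hu, by simpa using hv⟩
    exact htail s hs hs'
  obtain ⟨r, hr, hperm, hhead, hlast⟩ :=
    ih tail.length (by simp [← hn]) tail hp' (hS.infix infix_append_right) hpart' rfl
  refine ⟨r, hr, hperm.trans ?_, by simp [hhead, head?_append], ?_⟩
  · simpa only [append_assoc, perm_append_left_iff] using perm_append_comm_assoc B _ _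
  · rw [hlast, getLast?_append_of_ne_nil _ (cons_ne_nil _ _),
      getLast?_append_of_ne_nil _ (cons_ne_nil _ _)]

theorem flatten_map_zip_tail_take_drop {α : Type*} (l : List α) :
    ∀ (idx : List ℕ) (a b : ℕ), idx.IsChain (· ≤ ·) → idx.head? = some a →
      idx.getLast? = some b →
      a ≤ b ∧ ((idx.zip idx.tail).map fun ij => (l.drop ij.1).take (ij.2 - ij.1)).flatten =
        (l.drop a).take (b - a)
  | [], _, _, _, h, _ => by simp at h
  | [i], a, b, _, ha, hb => by simp_all
  | i :: j :: idx, a, b, hc, ha, hb => by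
    obtain ⟨hij, hc⟩ := isChain_cons_cons.mp hc
    obtain ⟨hjb, ih⟩ := flatten_map_zip_tail_take_drop l (j :: idx) j b hc rfl
      (by simpa using hb)
    obtain rfl : i = a := by simpa using ha
    refine ⟨hij.trans hjb, ?_⟩
    simp only [tail_cons, zip_cons_cons, List.map_cons, flatten_cons] at ih ⊢
    rw [ih, show b - i = (j - i) + (b - j) by omega, take_add, drop_drop,
      show i + (j - i) = j by omega]

theorem exists_getElem_of_mem_map_zip_tail {α : Type*} {f : ℕ × ℕ → α} {idx : List ℕ}
    {s : α} (hs : s ∈ (idx.zip idx.tail).map f) :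
    ∃ (j : ℕ) (h : j + 1 < idx.length), s = f (idx[j], idx[j + 1]) := by
  obtain ⟨ij, hij, rfl⟩ := mem_map.mp hs
  obtain ⟨j, hj, rfl⟩ := mem_iff_getElem.mp hij
  simp only [length_zip, length_tail, lt_inf_iff] at hj
  exact ⟨j, by omega, by simp⟩

theorem List.getElem_pair_infix {α : Type*} (p : List α) {i : ℕ} (h : i + 1 < p.length) :
    [p[i], p[i + 1]] <:+: p :=
  ⟨p.take i, p.drop (i + 2), by
    rw [append_assoc, cons_append, cons_append, nil_append, ← drop_eq_getElem_cons,
      ← drop_eq_getElem_cons, take_append_drop]⟩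

theorem HasPartner.exists_bridges {A : V → V → Prop} {q p : List V} (h : HasPartner A q p) :
    ∃ x y, [x, y] <:+: p ∧ Bridges A x y q := by
  obtain ⟨hq, i, hi, hx, hy⟩ := h
  exact ⟨_, _, p.getElem_pair_infix hi, hq, by simpa [head?_eq_some_head hq] using hx,
    by simpa [getLast?_eq_some_getLast hq] using hy⟩

theorem HasPartnerCollection.exists_flatten_eq {A : V → V → Prop} {q p : List V}
    (h : HasPartnerCollection A q p) :
    ∃ S : List (List V), S.flatten = q ∧ ∀ s ∈ S, HasPartner A s p := by
  obtain ⟨idx, hchain, hhead, hlast, hpart⟩ := h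
  have hflat := flatten_map_zip_tail_take_drop q idx 0 q.length
    (hchain.imp fun _ _ => le_of_lt) hhead hlast
  refine ⟨_, by simpa using hflat.2, ?_⟩
  intro s hs
  obtain ⟨j, hj, rfl⟩ := exists_getElem_of_mem_map_zip_tail hs
  simpa using hpart j hj

end MultiInsertion

theorem stmt6_general {V : Type*} [DecidableEq V] (A : V → V → Prop)
    (q : List V) (hq : IsPathList A q)
    (p : List V) (hp : IsPathList A p)
    (hdisj : ∀ v ∈ q, v ∉ p)
    (hcoll : HasPartnerCollection A q p) :
    ∃ r : List V, IsPathList A r ∧ r.toFinset = p.toFinset ∪ q.toFinset ∧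
      r.head? = p.head? ∧ r.getLast? = p.getLast? := by
  obtain ⟨S, rfl, hS⟩ := hcoll.exists_flatten_eq
  obtain ⟨r, hr, hperm, hhead, hlast⟩ := exists_isChain_perm_of_forall_bridges S hp.2 hq.2
    fun s hs => (hS s hs).exists_bridges
  have hnodup : (p ++ S.flatten).Nodup :=
    hp.1.append hq.1 fun v hvp hvq => hdisj v hvq hvp
  exact ⟨r, ⟨hperm.nodup_iff.mpr hnodup, hr⟩, by rw [toFinset_eq_of_perm _ _ hperm,
    toFinset_append], hhead, hlast⟩

/-- Multi-Insertion Lemma. -/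
theorem stmt6 {V : Type*} [DecidableEq V] (A : V → V → Prop)
    (q : List V) (hq : IsPathList A q) (hs : 1 ≤ q.length)
    (p : List V) (hp : IsPathList A p) (ht : 2 ≤ p.length)
    (hdisj : ∀ v ∈ q, v ∉ p)
    (hcoll : HasPartnerCollection A q p) :
    ∃ r : List V, IsPathList A r ∧ r.toFinset = p.toFinset ∪ q.toFinset ∧
      r.head? = p.head? ∧ r.getLast? = p.getLast? :=
  stmt6_general A q hq p hp hdisj hcoll
end

section
/- Let D be a digraph of order n ≥ 3 containing a cycle C = x_1 x_2 … x_{n−1} x_1 of length n−1, and let y be the vertex not on C. If D contains no Hamiltonian bypass, then for every i ∈ [1, n−1]: at most one of y x_i, y x_{i+1} is an arc of D, and at most one of x_i y, x_{i+1} y is an arc of D (indices modulo n−1). -/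
/-! Removing the arc `xᵢ xᵢ₊₁` from `C` leaves a path `xᵢ₊₁ … xᵢ` through all of `C`, hence
through every vertex but `y`. If `y` dominates both `xᵢ` and `xᵢ₊₁`, then `y xᵢ₊₁ … xᵢ` with the
arc `y xᵢ` is a Hamiltonian bypass; dually, if both dominate `y`, so is `xᵢ₊₁ … xᵢ y` with the arc
`xᵢ₊₁ y`. -/

open Finset

namespace List

variable {α : Type*}

theorem head_rotate (l : List α) (n : ℕ) (h : l.rotate n ≠ []) :
    (l.rotate n).head h =
      l[n % l.length]'(Nat.mod_lt _ (length_pos_of_ne_nil (by simpa using h))) := by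
  rw [head_eq_getElem, getElem_rotate, Nat.zero_add]

theorem getLast_rotate (l : List α) (n : ℕ) (h : l.rotate n ≠ []) :
    (l.rotate n).getLast h =
      l[(l.length - 1 + n) % l.length]'
        (Nat.mod_lt _ (length_pos_of_ne_nil (by simpa using h))) := by
  simp only [getLast_eq_getElem, getElem_rotate, length_rotate]

theorem Nodup.mem_of_card_le_length [Fintype α] {l : List α} (hl : l.Nodup)
    (hcard : Fintype.card α ≤ l.length) (a : α) : a ∈ l := by
  by_contra ha
  have := (nodup_cons.mpr ⟨ha, hl⟩).length_le_card
  rw [length_cons] at this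
  omega

end List

namespace IsCycleList

variable {V : Type*} {A : V → V → Prop} {c : List V}

theorem ne_nil (hc : IsCycleList A c) : c ≠ [] := by
  rintro rfl
  simpa using hc.1

theorem cycle_chain (hc : IsCycleList A c) : Cycle.Chain A (c : Cycle V) := by
  rw [Cycle.chain_ne_nil A hc.ne_nil]
  exact hc.2.2.1.cons fun b hb => by
    obtain rfl := Option.mem_some_iff.mp (List.head?_eq_some_head hc.ne_nil ▸ hb)
    exact hc.2.2.2 hc.ne_nil

theorem isChain_rotate (hc : IsCycleList A c) (n : ℕ) : (c.rotate n).IsChain A := by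
  have hchain : Cycle.Chain A (c.rotate n : Cycle V) := by
    rw [Cycle.coe_eq_coe.mpr (List.IsRotated.forall c n)]; exact hc.cycle_chain
  rw [Cycle.chain_ne_nil A (by simpa using hc.ne_nil)] at hchain
  exact hchain.tail

end IsCycleList

section HamBypass

variable {V : Type*} {A : V → V → Prop} {p : List V} {y : V}

theorem hasHamBypass_of_cons (hnodup : (y :: p).Nodup) (hspan : ∀ v, v ∈ y :: p)
    (hchain : p.IsChain A) (hne : p ≠ []) (hhead : A y (p.head hne))
    (hlast : A y (p.getLast hne)) : HasHamBypass A := by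
  refine ⟨y :: p, hnodup, hspan, hchain.cons fun b hb => ?_, fun _ => ?_⟩
  · obtain rfl := Option.mem_some_iff.mp (List.head?_eq_some_head hne ▸ hb)
    exact hhead
  · rwa [List.getLast_cons hne]

theorem hasHamBypass_of_concat (hnodup : (y :: p).Nodup) (hspan : ∀ v, v ∈ y :: p)
    (hchain : p.IsChain A) (hne : p ≠ []) (hhead : A (p.head hne) y)
    (hlast : A (p.getLast hne) y) : HasHamBypass A := by
  have hperm : (p ++ [y]).Perm (y :: p) := List.perm_append_singleton y p
  refine ⟨p ++ [y], hperm.nodup_iff.mpr hnodup, fun v => hperm.mem_iff.mpr (hspan v),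
    hchain.append (List.isChain_singleton y) fun a ha b hb => ?_, fun _ => ?_⟩
  · obtain rfl := Option.mem_some_iff.mp (List.getLast?_eq_some_getLast hne ▸ ha)
    obtain rfl := Option.mem_some_iff.mp hb
    exact hlast
  · rwa [List.getLast_concat, List.head_append_of_ne_nil hne]

end HamBypass

/-- Lemma 7(i). -/
theorem stmt7 {V : Type*} [Fintype V] (A : V → V → Prop)
    (c : List V) (hc : IsCycleList A c) (hlen : c.length = Fintype.card V - 1)
    (y : V) (hy : y ∉ c)
    (hnb : ¬HasHamBypass A) :
    ∀ i : ℕ, ∀ h : i < c.length,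
      ¬(A y (c.get ⟨i, h⟩) ∧ A y (c.get ⟨(i + 1) % c.length, Nat.mod_lt _ (by omega)⟩)) ∧
      ¬(A (c.get ⟨i, h⟩) y ∧ A (c.get ⟨(i + 1) % c.length, Nat.mod_lt _ (by omega)⟩) y) := by
  intro i hi
  set p := c.rotate (i + 1)
  have hne : p ≠ [] := by simpa [p] using hc.ne_nil
  have hhead : p.head hne = c.get ⟨(i + 1) % c.length, Nat.mod_lt _ (by omega)⟩ :=
    c.head_rotate _ hne
  have hlast : p.getLast hne = c.get ⟨i, hi⟩ := by
    rw [c.getLast_rotate _ hne, List.get_eq_getElem]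
    congr 1
    rw [show c.length - 1 + (i + 1) = i + c.length by omega, Nat.add_mod_right,
      Nat.mod_eq_of_lt hi]
  have hnodup : (y :: p).Nodup :=
    List.nodup_cons.mpr ⟨by simpa [p] using hy, List.nodup_rotate.mpr hc.2.1⟩
  have hspan : ∀ v, v ∈ y :: p := hnodup.mem_of_card_le_length (by simp [p]; omega)
  refine ⟨fun ⟨hyx, hyx'⟩ => hnb ?_, fun ⟨hxy, hx'y⟩ => hnb ?_⟩
  · exact hasHamBypass_of_cons hnodup hspan (hc.isChain_rotate _) hne
      (hhead ▸ hyx') (hlast ▸ hyx)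
  · exact hasHamBypass_of_concat hnodup hspan (hc.isChain_rotate _) hne
      (hhead ▸ hx'y) (hlast ▸ hxy)
end

section
/- Let D be a digraph of order n ≥ 3 containing a cycle C of length n−1 with y the vertex not on C. If D contains no Hamiltonian bypass, then d^+(y) ≤ (n−1)/2, d^-(y) ≤ (n−1)/2, and d(y) ≤ n−1. -/
open Finset

/-! If `y` had two out-neighbours `u`, `u⁺` consecutive on `C`, then `y u⁺ … u`, running once
around `C`, is a Hamiltonian path, and together with the arc `y u` a Hamiltonian bypass; dually
for in-neighbours. So the out- and the in-neighbours of `y` each fill at most every other vertex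
of the cycle, of length `n - 1`, and adding the two bounds gives `d(y) ≤ n - 1`. -/

section

variable {V : Type*} {A : V → V → Prop}

theorem IsCycleList.cycle_chain_s8 {c : List V} (hc : IsCycleList A c) :
    Cycle.Chain A (c : Cycle V) := by
  obtain ⟨hlen, -, hchain, hclose⟩ := hc
  obtain ⟨b, l, rfl⟩ := List.exists_cons_of_length_pos (by omega : 0 < c.length)
  rw [Cycle.chain_ne_nil _ (List.cons_ne_nil b l), List.isChain_cons_cons]
  exact ⟨hclose (List.cons_ne_nil b l), hchain⟩

/-- `c.formPerm u` is the successor of `u` on the cycle `c`. -/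
theorem IsCycleList.exists_rotation_path [DecidableEq V] {c : List V} (hc : IsCycleList A c) {u : V}
    (hu : u ∈ c) :
    ∃ l : List V, (c.formPerm u :: (l ++ [u])) ~r c ∧
      (c.formPerm u :: (l ++ [u])).IsChain A := by
  have hlen := hc.1
  have hnodup := hc.2.1
  have hcycle := hc.cycle_chain_s8
  obtain ⟨l₁, l₂, rfl⟩ := List.append_of_mem hu
  obtain ⟨x, l, hxl⟩ : ∃ x l, l₂ ++ l₁ = x :: l := by
    refine List.exists_cons_of_length_pos ?_
    simp only [List.length_append, List.length_cons] at hlen ⊢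
    omega
  have hrot : (x :: (l ++ [u])) ~r (l₁ ++ u :: l₂) := by
    rw [show l₁ ++ u :: l₂ = l₁ ++ [u] ++ l₂ by simp]
    simpa [← List.append_assoc, hxl] using
      (List.isRotated_append (l := l₁ ++ [u]) (l' := l₂)).symm
  have hx : (l₁ ++ u :: l₂).formPerm u = x := by
    rw [List.formPerm_eq_of_isRotated hnodup hrot.symm, List.formPerm_cons_concat_apply_last]
  refine ⟨l, hx ▸ hrot, ?_⟩
  rw [← Cycle.coe_eq_coe] at hrot
  rw [← hrot, Cycle.chain_ne_nil _ (List.cons_ne_nil _ _)] at hcycle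
  exact hx ▸ hcycle.tail

section Bypass

variable [DecidableEq V] {c : List V} {y u : V}

theorem hasHamBypass_of_adj_of_adj_formPerm (hc : IsCycleList A c)
    (hspan : ∀ v, v = y ∨ v ∈ c) (hy : y ∉ c) (hu : u ∈ c) (hyu : A y u)
    (hyσu : A y (c.formPerm u)) : HasHamBypass A := by
  obtain ⟨l, hrot, hpath⟩ := hc.exists_rotation_path hu
  refine ⟨y :: c.formPerm u :: (l ++ [u]), ?_, ?_, ?_, fun _ => by simpa using hyu⟩
  · exact List.nodup_cons.2 ⟨fun h => hy (hrot.mem_iff.1 h), hrot.nodup_iff.2 hc.2.1⟩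
  · intro v
    rcases hspan v with rfl | hv
    · exact List.mem_cons_self
    · exact List.mem_cons_of_mem _ (hrot.mem_iff.2 hv)
  · exact List.isChain_cons_cons.2 ⟨hyσu, hpath⟩

theorem hasHamBypass_of_adj_of_formPerm_adj (hc : IsCycleList A c)
    (hspan : ∀ v, v = y ∨ v ∈ c) (hy : y ∉ c) (hu : u ∈ c) (huy : A u y)
    (hσuy : A (c.formPerm u) y) : HasHamBypass A := by
  obtain ⟨l, hrot, hpath⟩ := hc.exists_rotation_path hu
  refine ⟨c.formPerm u :: (l ++ [u]) ++ [y], ?_, ?_, ?_, fun _ => by simpa using hσuy⟩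
  · exact List.nodup_append.2 ⟨hrot.nodup_iff.2 hc.2.1, List.nodup_singleton y,
      fun v hv w hw => by
        rintro rfl; exact hy (List.eq_of_mem_singleton hw ▸ hrot.mem_iff.1 hv)⟩
  · intro v
    rcases hspan v with rfl | hv
    · simp
    · exact List.mem_append_left _ (hrot.mem_iff.2 hv)
  · exact List.isChain_append.2 ⟨hpath, List.isChain_singleton y, by
      rw [← List.cons_append, List.getLast?_concat]; simpa using huy⟩

end Bypass

theorem Finset.two_mul_card_le_of_injective {α : Type*} [DecidableEq α] {f : α → α}
    (hf : Function.Injective f) {S T : Finset α} (hST : S ⊆ T) (hfT : ∀ u ∈ S, f u ∈ T)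
    (hfS : ∀ u ∈ S, f u ∉ S) : 2 * #S ≤ #T := by
  have hdisj : Disjoint S (S.image f) := by
    rw [Finset.disjoint_right]
    rintro _ hv hvS
    obtain ⟨u, hu, rfl⟩ := Finset.mem_image.1 hv
    exact hfS u hu hvS
  calc 2 * #S = #S + #(S.image f) := by rw [Finset.card_image_of_injective S hf]; ring
    _ = #(S ∪ S.image f) := (Finset.card_union_of_disjoint hdisj).symm
    _ ≤ #T := Finset.card_le_card (Finset.union_subset hST (by simpa [Finset.image_subset_iff]))

section Counting

variable [Fintype V] [DecidableEq V] {c : List V} {y : V}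

theorem eq_or_mem_of_length_eq_card_sub_one (hc : c.Nodup) (hlen : c.length = Fintype.card V - 1)
    (hy : y ∉ c) (v : V) : v = y ∨ v ∈ c := by
  have hcard : #(insert y c.toFinset) = Fintype.card V := by
    have : 0 < Fintype.card V := Fintype.card_pos_iff.2 ⟨y⟩
    rw [Finset.card_insert_of_notMem (by simpa using hy), List.toFinset_card_of_nodup hc]
    omega
  have hv := Finset.mem_univ v
  rw [← Finset.eq_univ_of_card _ hcard] at hv
  simpa using hv

theorem two_mul_card_filter_le_length (hc : c.Nodup) (hspan : ∀ v, v = y ∨ v ∈ c)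
    (P : V → Prop) [DecidablePred P] (hPy : ¬P y)
    (hP : ∀ u ∈ c, P u → ¬P (c.formPerm u)) :
    2 * #(univ.filter P) ≤ c.length := by
  have hmem : ∀ v ∈ univ.filter P, v ∈ c := fun v hv =>
    (hspan v).resolve_left fun hvy => hPy (hvy ▸ (Finset.mem_filter.1 hv).2)
  rw [← List.toFinset_card_of_nodup hc]
  refine Finset.two_mul_card_le_of_injective c.formPerm.injective
    (fun v hv => List.mem_toFinset.2 (hmem v hv))
    (fun v hv => List.mem_toFinset.2 (List.formPerm_apply_mem_of_mem (hmem v hv))) ?_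
  intro v hv hσv
  exact hP v (hmem v hv) (Finset.mem_filter.1 hv).2 (Finset.mem_filter.1 hσv).2

end Counting

end

theorem stmt8_general {V : Type*} [Fintype V] [DecidableEq V] (A : V → V → Prop) [DecidableRel A]
    (hirr : ∀ v, ¬A v v)
    (c : List V) (hc : IsCycleList A c) (hlen : c.length = Fintype.card V - 1)
    (y : V) (hy : y ∉ c)
    (hnb : ¬HasHamBypass A) :
    2 * outDeg A y ≤ Fintype.card V - 1 ∧ 2 * inDeg A y ≤ Fintype.card V - 1 ∧
      deg A y ≤ Fintype.card V - 1 := by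
  have hspan := eq_or_mem_of_length_eq_card_sub_one hc.2.1 hlen hy
  have hout : 2 * outDeg A y ≤ c.length :=
    two_mul_card_filter_le_length hc.2.1 hspan _ (hirr y) fun u hu hyu hyσu =>
      hnb (hasHamBypass_of_adj_of_adj_formPerm hc hspan hy hu hyu hyσu)
  have hin : 2 * inDeg A y ≤ c.length :=
    two_mul_card_filter_le_length hc.2.1 hspan _ (hirr y) fun u hu huy hσuy =>
      hnb (hasHamBypass_of_adj_of_formPerm_adj hc hspan hy hu huy hσuy)
  refine ⟨hlen ▸ hout, hlen ▸ hin, ?_⟩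
  unfold deg
  omega

/-- Lemma 7(ii). -/
theorem stmt8 {V : Type*} [Fintype V] [DecidableEq V] (A : V → V → Prop) [DecidableRel A]
    (hirr : ∀ v, ¬A v v) (hn : 3 ≤ Fintype.card V)
    (c : List V) (hc : IsCycleList A c) (hlen : c.length = Fintype.card V - 1)
    (y : V) (hy : y ∉ c)
    (hnb : ¬HasHamBypass A) :
    2 * outDeg A y ≤ Fintype.card V - 1 ∧ 2 * inDeg A y ≤ Fintype.card V - 1 ∧
      deg A y ≤ Fintype.card V - 1 :=
  stmt8_general A hirr c hc hlen y hy hnb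
end

section
/- The tournament T(5) on vertices {x_1,x_2,x_3,x_4,y} with arc set {x_1x_2, x_2x_3, x_3x_4, x_4x_1, x_1y, x_3y, yx_2, yx_4, x_1x_3, x_2x_4} is strongly connected, satisfies condition A_0 (with n = 5), but contains no Hamiltonian bypass. -/
open Finset

/-- The tournament `T(5)`: vertices `0,1,2,3` stand for `x₁,x₂,x₃,x₄` and `4` for `y`. -/
def T5Adj : Fin 5 → Fin 5 → Prop := fun u v =>
  (u.val, v.val) ∈ [(0, 1), (1, 2), (2, 3), (3, 0), (0, 4), (2, 4), (4, 1), (4, 3),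
    (0, 2), (1, 3)]

instance : DecidableRel T5Adj := fun u v => by
  unfold T5Adj; infer_instance

/-!
`T(5)` is a tournament, so condition `A₀` holds vacuously: it only constrains non-adjacent pairs.
It is strongly connected because `x₁ y x₂ x₃ x₄` is a Hamiltonian cycle. A Hamiltonian bypass
is an ordering of the five vertices in which consecutive vertices, and also the first and the
last, are joined by arcs; none of the `5! = 120` orderings qualifies, which is checked by
evaluation.
-/

open Relation

theorem HasHamCycle.reflTransGen {V : Type*} {A : V → V → Prop} (h : HasHamCycle A) (u v : V) :
    ReflTransGen A u v := by
  obtain ⟨c, ⟨-, -, hchain, hclose⟩, hall⟩ := h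
  have hne : c ≠ [] := List.ne_nil_of_mem (hall u)
  have to_last : ReflTransGen A u (c.getLast hne) :=
    hchain.backwards_induction (ReflTransGen A · (c.getLast hne)) c
      (fun _ _ hxy hy => hy.head hxy) (fun _ => .refl) u (hall u)
  have from_head : ReflTransGen A (c.head hne) v :=
    hchain.induction (ReflTransGen A (c.head hne) ·) c
      (fun _ _ hxy hx => hx.tail hxy) (fun _ => .refl) v (hall v)
  exact to_last.trans (ReflTransGen.head (hclose hne) from_head)

theorem condA_of_adj_or_adj {V : Type*} [Fintype V] [DecidableEq V] {A : V → V → Prop}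
    [DecidableRel A] (h : ∀ x y, x ≠ y → A x y ∨ A y x) (k : ℤ) : CondA A k :=
  fun x y _ hxy _ _ hnxy hnyx => ((h x y hxy).elim hnxy hnyx).elim

/- Stated with `permutations'` and `head?`/`getLast?` so that the conclusion is decidable by
kernel reduction (`permutations` is defined by well-founded recursion). -/
theorem HasHamBypass.exists_mem_permutations' {V : Type*} {A : V → V → Prop} {s : List V}
    (hs : s.Nodup) (hmem : ∀ v, v ∈ s) (h : HasHamBypass A) :
    ∃ l ∈ s.permutations', l.IsChain A ∧ ∀ a ∈ l.head?, ∀ b ∈ l.getLast?, A a b := by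
  obtain ⟨l, hl, hall, hchain, hbypass⟩ := h
  refine ⟨l, List.mem_permutations'.mpr ((List.perm_ext_iff_of_nodup hl hs).mpr
    fun v => iff_of_true (hall v) (hmem v)), hchain, fun a ha b hb => ?_⟩
  have hne : l ≠ [] := List.ne_nil_of_mem (hall a)
  rw [List.head?_eq_some_head hne, Option.mem_some_iff] at ha
  rw [List.getLast?_eq_some_getLast hne, Option.mem_some_iff] at hb
  exact ha ▸ hb ▸ hbypass hne

theorem t5Adj_iff_not_t5Adj : ∀ u v : Fin 5, u ≠ v → (T5Adj u v ↔ ¬T5Adj v u) := by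
  decide

theorem hasHamCycle_t5Adj : HasHamCycle T5Adj :=
  ⟨[0, 4, 1, 2, 3],
    ⟨by decide, by decide, (by decide : [0, 4, 1, 2, 3].IsChain T5Adj), fun _ => by decide +revert⟩,
    by decide⟩

theorem not_hasHamBypass_t5Adj : ¬HasHamBypass T5Adj :=
  mt (HasHamBypass.exists_mem_permutations' (List.nodup_finRange 5) List.mem_finRange)
    (by decide +kernel)

/-- `T(5)` is a strongly connected tournament satisfying `A₀` with no
Hamiltonian bypass. -/
theorem stmt11 :
    (∀ u v : Fin 5, u ≠ v → (T5Adj u v ↔ ¬T5Adj v u)) ∧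
    (∀ u v : Fin 5, Relation.ReflTransGen T5Adj u v) ∧
    CondA T5Adj 0 ∧ ¬HasHamBypass T5Adj := by
  refine ⟨t5Adj_iff_not_t5Adj, hasHamCycle_t5Adj.reflTransGen, ?_, not_hasHamBypass_t5Adj⟩
  exact condA_of_adj_or_adj
    (fun u v huv => or_iff_not_imp_right.mpr (t5Adj_iff_not_t5Adj u v huv).mpr) 0
end

section
/- For n ≥ 4 and k ∈ [1, n−2], the digraph D_1 obtained from the complete digraphs K*_{n−k} and K*_{k+1} by identifying one vertex of the first with one vertex of the second satisfies condition A_{−1}, but contains no Hamiltonian bypass. -/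
open Finset

/-
The shared vertex `c` separates the two cliques `L` and `R`: an arc avoiding `c` stays on one
side. A Hamiltonian path `v₁ … vₙ` passes through `c` once, so the part before `c` and the part
after `c` lie on different sides (each side has a vertex other than `c`), and the arc `v₁vₙ`
would join them. For `A_{-1}`, two non-adjacent vertices are one in `L \ R` and one in `R \ L`,
and the degree sum in either inequality is exactly `3(|L| + |R|) - 6 = 3n - 3`.
-/

section Separation

variable {V : Type*} {A : V → V → Prop} {P : V → Prop} {c : V}

theorem List.IsChain.iff_of_separating (hsep : ∀ u v, A u v → u ≠ c → v ≠ c → (P u ↔ P v))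
    {l : List V} (hl : l.IsChain A) (hc : c ∉ l) {a b : V} (ha : a ∈ l) (hb : b ∈ l) :
    P a ↔ P b := by
  obtain ⟨x, t, rfl⟩ := List.exists_cons_of_ne_nil (List.ne_nil_of_mem ha)
  have hx : ∀ i ∈ x :: t, P i ↔ P x :=
    (List.IsChain.iff_mem.mp hl).induction (fun i => P i ↔ P x) _
      (fun u v ⟨hu, hv, huv⟩ hux =>
        (hsep u v huv (ne_of_mem_of_not_mem hu hc) (ne_of_mem_of_not_mem hv hc)).symm.trans hux)
      (fun _ => Iff.rfl)
  exact (hx a ha).trans (hx b hb).symm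

theorem not_hasHamBypass_of_separating (hsep : ∀ u v, A u v → u ≠ c → v ≠ c → (P u ↔ P v))
    {a b : V} (ha : a ≠ c) (hb : b ≠ c) (hPa : P a) (hPb : ¬P b) : ¬HasHamBypass A := by
  rintro ⟨l, hnd, hall, hch, harc⟩
  obtain ⟨s, t, rfl⟩ := List.append_of_mem (hall c)
  have hcs : c ∉ s := fun h => (List.nodup_append.mp hnd).2.2 c h c List.mem_cons_self rfl
  have hct : c ∉ t := (List.nodup_append.mp hnd).2.1.notMem
  have hs : s.IsChain A := (List.isChain_append.mp hch).1
  have ht : t.IsChain A := (List.isChain_append.mp hch).2.1.tail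
  have hside : ∀ v ≠ c, v ∈ s ∨ v ∈ t := fun v hv => by simpa [hv] using hall v
  have hst : ∀ u ∈ s, ∀ v ∈ t, P u ↔ P v := by
    intro u hu v hv
    have hsne := List.ne_nil_of_mem hu
    have htne := List.ne_nil_of_mem hv
    have hbypass : A (s.head hsne) (t.getLast htne) := by
      simpa [List.head_append_of_ne_nil hsne, List.getLast_append_of_right_ne_nil,
        List.getLast_cons htne] using harc (by simp)
    have hsep' := hsep _ _ hbypass (ne_of_mem_of_not_mem (List.head_mem hsne) hcs)
      (ne_of_mem_of_not_mem (List.getLast_mem htne) hct)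
    exact (hs.iff_of_separating hsep hcs hu (List.head_mem hsne)).trans <|
      hsep'.trans (ht.iff_of_separating hsep hct (List.getLast_mem htne) hv)
  apply hPb
  rcases hside a ha with has | hat <;> rcases hside b hb with hbs | hbt
  · exact (hs.iff_of_separating hsep hcs has hbs).mp hPa
  · exact (hst a has b hbt).mp hPa
  · exact (hst b hbs a hat).mpr hPa
  · exact (ht.iff_of_separating hsep hct hat hbt).mp hPa

end Separation

def IsCliqueUnion {V : Type*} (A : V → V → Prop) (L R : Finset V) : Prop :=
  ∀ u v, A u v ↔ u ≠ v ∧ (u ∈ L ∧ v ∈ L ∨ u ∈ R ∧ v ∈ R)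

namespace IsCliqueUnion

variable {V : Type*} {A : V → V → Prop} {L R : Finset V}

theorem symm (hA : IsCliqueUnion A L R) : IsCliqueUnion A R L := fun u v => by
  rw [hA u v, or_comm]

variable [DecidableEq V]

theorem not_hasHamBypass (hA : IsCliqueUnion A L R) {c : V} (hcap : L ∩ R = {c}) {a b : V}
    (haL : a ∈ L) (haR : a ∉ R) (hbL : b ∉ L) : ¬HasHamBypass A := by
  have hmem : ∀ {v}, v ∈ L → v ∈ R → v = c := fun hL hR => by
    simpa [hcap] using mem_inter.mpr ⟨hL, hR⟩
  have hc : c ∈ L ∧ c ∈ R := mem_inter.mp (hcap ▸ mem_singleton_self c)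
  refine not_hasHamBypass_of_separating (P := (· ∈ L)) (a := a) (b := b) ?_
    (fun h => haR (h ▸ hc.2)) (fun h => hbL (h ▸ hc.1)) haL hbL
  intro u v huv hu hv
  rcases ((hA u v).mp huv).2 with ⟨huL, hvL⟩ | ⟨huR, hvR⟩
  · exact iff_of_true huL hvL
  · exact iff_of_false (fun h => hu (hmem h huR)) (fun h => hv (hmem h hvR))

variable [Fintype V] [DecidableRel A]

theorem outDeg_eq_card_sub_one (hA : IsCliqueUnion A L R) {x : V} (hxL : x ∈ L) (hxR : x ∉ R) :
    outDeg A x = #L - 1 := by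
  have h : univ.filter (A x ·) = L.erase x := by
    ext y
    simp only [mem_filter, mem_univ, true_and, mem_erase, hA x y]
    tauto
  rw [outDeg, outDegOn, h, card_erase_of_mem hxL]

theorem inDeg_eq_card_sub_one (hA : IsCliqueUnion A L R) {x : V} (hxL : x ∈ L) (hxR : x ∉ R) :
    inDeg A x = #L - 1 := by
  have h : univ.filter (A · x) = L.erase x := by
    ext y
    simp only [mem_filter, mem_univ, true_and, mem_erase, hA y x]
    tauto
  rw [inDeg, inDegOn, h, card_erase_of_mem hxL]

theorem deg_eq_two_mul_card_sub_one (hA : IsCliqueUnion A L R) {x : V} (hxL : x ∈ L)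
    (hxR : x ∉ R) : deg A x = 2 * (#L - 1) := by
  rw [deg, hA.outDeg_eq_card_sub_one hxL hxR, hA.inDeg_eq_card_sub_one hxL hxR, two_mul]

theorem condA_neg_one_of_mem_sdiff (hA : IsCliqueUnion A L R) (hcover : L ∪ R = univ) {c : V}
    (hcap : L ∩ R = {c}) {x y z : V} (hxL : x ∈ L) (hxR : x ∉ R) (hyL : y ∉ L) (hyR : y ∈ R)
    (hzx : z ≠ x) :
    (¬A x z → (deg A x + deg A y + outDeg A x + inDeg A z : ℤ) ≥
      3 * (Fintype.card V : ℤ) - 2 + -1) ∧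
    (¬A z x → (deg A x + deg A y + inDeg A x + outDeg A z : ℤ) ≥
      3 * (Fintype.card V : ℤ) - 2 + -1) := by
  have hcard : #L + #R = Fintype.card V + 1 := by
    rw [← card_union_add_card_inter, hcover, hcap, card_univ, card_singleton]
  have hL := card_pos.mpr ⟨x, hxL⟩
  have hR := card_pos.mpr ⟨y, hyR⟩
  have hdx := hA.deg_eq_two_mul_card_sub_one hxL hxR
  have hdy := hA.symm.deg_eq_two_mul_card_sub_one hyR hyL
  -- a vertex missing an arc to or from `x` lies outside `x`'s clique, as `y` does
  have hz : ¬A x z ∨ ¬A z x → z ∈ R ∧ z ∉ L := fun h => by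
    have hzL : z ∉ L := fun hzL => h.elim (· ((hA x z).mpr ⟨hzx.symm, .inl ⟨hxL, hzL⟩⟩))
      (· ((hA z x).mpr ⟨hzx, .inl ⟨hzL, hxL⟩⟩))
    exact ⟨(mem_union.mp (hcover ▸ mem_univ z)).resolve_left hzL, hzL⟩
  constructor
  · intro h
    obtain ⟨hzR, hzL⟩ := hz (.inl h)
    rw [hdx, hdy, hA.outDeg_eq_card_sub_one hxL hxR, hA.symm.inDeg_eq_card_sub_one hzR hzL]
    omega
  · intro h
    obtain ⟨hzR, hzL⟩ := hz (.inr h)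
    rw [hdx, hdy, hA.inDeg_eq_card_sub_one hxL hxR, hA.symm.outDeg_eq_card_sub_one hzR hzL]
    omega

theorem condA_neg_one (hA : IsCliqueUnion A L R) (hcover : L ∪ R = univ) {c : V}
    (hcap : L ∩ R = {c}) : CondA A (-1) := by
  intro x y z hxy hzx _ hnxy _
  have hx := mem_union.mp (hcover ▸ mem_univ x)
  have hy := mem_union.mp (hcover ▸ mem_univ y)
  have hsplit : ¬(x ∈ L ∧ y ∈ L) ∧ ¬(x ∈ R ∧ y ∈ R) := by
    simpa [hA x y, hxy, not_or] using hnxy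
  by_cases hxL : x ∈ L
  · exact hA.condA_neg_one_of_mem_sdiff hcover hcap hxL (by tauto) (by tauto) (by tauto) hzx
  · rw [union_comm] at hcover
    rw [inter_comm] at hcap
    exact hA.symm.condA_neg_one_of_mem_sdiff hcover hcap (by tauto) hxL (by tauto) (by tauto) hzx

end IsCliqueUnion

theorem stmt12_general (n k : ℕ) (hk1 : 1 ≤ k) (hk2 : k ≤ n - 2)
    (A : Fin n → Fin n → Prop) [DecidableRel A]
    (hA : ∀ u v : Fin n, A u v ↔ u ≠ v ∧
      ((u.val ≤ n - k - 1 ∧ v.val ≤ n - k - 1) ∨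
       (n - k - 1 ≤ u.val ∧ n - k - 1 ≤ v.val))) :
    CondA A (-1) ∧ ¬HasHamBypass A := by
  let c : Fin n := ⟨n - k - 1, by omega⟩
  have hD : IsCliqueUnion A (Iic c) (Ici c) := fun u v => by
    simp only [hA, mem_Iic, mem_Ici, Fin.le_def, c]
  have hcap : Iic c ∩ Ici c = {c} := by
    ext v
    simp [le_antisymm_iff]
  refine ⟨hD.condA_neg_one (by ext v; simp [le_total]) hcap,
    hD.not_hasHamBypass hcap (a := ⟨0, by omega⟩) (b := ⟨n - 1, by omega⟩) ?_ ?_ ?_⟩ <;>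
  simp [Fin.le_def, c] <;> omega

/-- the digraph `D₁` obtained from two complete digraphs `K*_{n-k}` and
`K*_{k+1}` sharing exactly one vertex satisfies `A_{-1}` but has no Hamiltonian
bypass.  Vertices `0,…,n-k-1` carry the first complete digraph and vertices
`n-k-1,…,n-1` the second. -/
theorem stmt12 (n k : ℕ) (hn : 4 ≤ n) (hk1 : 1 ≤ k) (hk2 : k ≤ n - 2)
    (A : Fin n → Fin n → Prop) [DecidableRel A]
    (hA : ∀ u v : Fin n, A u v ↔ u ≠ v ∧
      ((u.val ≤ n - k - 1 ∧ v.val ≤ n - k - 1) ∨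
       (n - k - 1 ≤ u.val ∧ n - k - 1 ≤ v.val))) :
    CondA A (-1) ∧ ¬HasHamBypass A :=
  stmt12_general n k hk1 hk2 A hA
end
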